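/- arXiv:1502.03691 — 2 statements merged into one kernel-verified Lean document; each statement's English description precedes it below -/
import Mathlib

section
/- Let R be a commutative ring with nonzero identity and I a radical ideal of R. Suppose Γ(R/I) is uniquely complemented, x ⊥ y and x ⊥ z in Γ_I(R), and α ∈ R \ I. Then αy ∈ I if and only if αz ∈ I. -/
open Ideal Polynomial

-- The zero-divisor graph Γ(S): vertices are the nonzero zero-divisors,
-- distinct vertices adjacent iff their product is zero.  We realize it as a
-- graph on the whole ring whose adjacency relation encodes vertexhood.
def zdVertexSet (S : Type*) [CommRing S] : Set S :=
  {x | x ≠ 0 ∧ ∃ y, y ≠ 0 ∧ x * y = 0}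

def zdGraph (S : Type*) [CommRing S] : SimpleGraph S where
  Adj x y := x ≠ y ∧ x ≠ 0 ∧ y ≠ 0 ∧ x * y = 0
  symm := ⟨fun x y ⟨h1, h2, h3, h4⟩ => ⟨h1.symm, h3, h2, by rwa [mul_comm]⟩⟩
  loopless := ⟨fun x h => h.1 rfl⟩

-- The ideal-based zero-divisor graph Γ_I(R):
-- vertices {x ∈ R \ I : ∃ y ∈ R \ I, x*y ∈ I}, distinct x,y adjacent iff x*y ∈ I.
def idealVertexSet {R : Type*} [CommRing R] (I : Ideal R) : Set R :=
  {x | x ∉ I ∧ ∃ y, y ∉ I ∧ x * y ∈ I}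

def idealGraph {R : Type*} [CommRing R] (I : Ideal R) : SimpleGraph R where
  Adj x y := x ≠ y ∧ x ∉ I ∧ y ∉ I ∧ x * y ∈ I
  symm := ⟨fun x y ⟨h1, h2, h3, h4⟩ => ⟨h1.symm, h3, h2, by rwa [mul_comm]⟩⟩
  loopless := ⟨fun x h => h.1 rfl⟩

-- a ⊥ b : a and b are adjacent and no vertex is adjacent to both.
def Orth {V : Type*} (G : SimpleGraph V) (a b : V) : Prop :=
  G.Adj a b ∧ ∀ c, ¬(G.Adj a c ∧ G.Adj b c)

-- a ~ b : a and b are nonadjacent with exactly the same neighbors.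
def Sim {V : Type*} (G : SimpleGraph V) (a b : V) : Prop :=
  ¬G.Adj a b ∧ ∀ c, G.Adj a c ↔ G.Adj b c

-- A graph (with specified vertex set S) is complemented if every vertex has an
-- orthogonal partner.
def Complemented {V : Type*} (G : SimpleGraph V) (S : Set V) : Prop :=
  ∀ a ∈ S, ∃ b ∈ S, Orth G a b

def UniquelyComplemented {V : Type*} (G : SimpleGraph V) (S : Set V) : Prop :=
  Complemented G S ∧ ∀ a b c, Orth G a b → Orth G a c → Sim G b c

/-! Since `I` is radical, `R ⧸ I` is reduced, and in a reduced ring the distinctness clause in the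
adjacency of a zero-divisor graph is automatic (`a * a = 0` forces `a = 0`). Hence `Γ_I(R)` is
exactly the pullback of `Γ(R ⧸ I)` along the quotient map. As this map is surjective, `⊥` and `~`
transfer along it, so unique complementedness of `Γ(R ⧸ I)` gives `y ~ z` in `Γ_I(R)`. For
`α ∉ I`, membership `α * y ∈ I` means that `y` and `α` are adjacent, and `y ~ z` turns this into
adjacency of `z` and `α`. -/

section Comap

variable {V W : Type*} {H : SimpleGraph W} {f : V → W}

theorem orth_comap_iff (hf : Function.Surjective f) {a b : V} :
    Orth (H.comap f) a b ↔ Orth H (f a) (f b) := by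
  simp only [Orth, SimpleGraph.comap_adj, hf.forall]

theorem sim_comap_iff (hf : Function.Surjective f) {a b : V} :
    Sim (H.comap f) a b ↔ Sim H (f a) (f b) := by
  simp only [Sim, SimpleGraph.comap_adj, hf.forall]

end Comap

theorem zdGraph_adj_iff {S : Type*} [CommRing S] [IsReduced S] {a b : S} :
    (zdGraph S).Adj a b ↔ a ≠ 0 ∧ b ≠ 0 ∧ a * b = 0 := by
  refine ⟨fun h => h.2, fun ⟨ha, hb, hab⟩ => ⟨?_, ha, hb, hab⟩⟩
  rintro rfl
  exact ha (isNilpotent_iff_eq_zero.mp ⟨2, by rwa [sq]⟩)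

section IdealGraph

variable {R : Type*} [CommRing R] {I : Ideal R}

theorem idealGraph_adj_iff (hI : I.IsRadical) {a b : R} :
    (idealGraph I).Adj a b ↔ a ∉ I ∧ b ∉ I ∧ a * b ∈ I := by
  refine ⟨fun h => h.2, fun ⟨ha, hb, hab⟩ => ⟨?_, ha, hb, hab⟩⟩
  rintro rfl
  exact ha (hI ⟨2, by rwa [sq]⟩)

theorem idealGraph_eq_comap_zdGraph (hI : I.IsRadical) :
    idealGraph I = (zdGraph (R ⧸ I)).comap (Ideal.Quotient.mk I) := by
  have := (Ideal.isRadical_iff_quotient_reduced I).mp hI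
  ext a b
  simp only [idealGraph_adj_iff hI, SimpleGraph.comap_adj, zdGraph_adj_iff, ne_eq,
    Ideal.Quotient.eq_zero_iff_mem, ← map_mul]

theorem mul_mem_iff_idealGraph_adj (hI : I.IsRadical) {a b : R} (ha : a ∉ I) (hb : b ∉ I) :
    a * b ∈ I ↔ (idealGraph I).Adj a b := by
  simp [idealGraph_adj_iff hI, ha, hb]

end IdealGraph

theorem stmt7_general {R : Type*} [CommRing R] (I : Ideal R)
    (hrad : I.radical = I)
    (huc : UniquelyComplemented (zdGraph (R ⧸ I)) (zdVertexSet (R ⧸ I)))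
    (x y z α : R)
    (hxy : Orth (idealGraph I) x y) (hxz : Orth (idealGraph I) x z)
    (hα : α ∉ I) :
    α * y ∈ I ↔ α * z ∈ I := by
  have hI : I.IsRadical := Ideal.radical_eq_iff.mp hrad
  have hy : y ∉ I := hxy.1.2.2.1
  have hz : z ∉ I := hxz.1.2.2.1
  have hmk := Ideal.Quotient.mk_surjective (I := I)
  rw [idealGraph_eq_comap_zdGraph hI, orth_comap_iff hmk] at hxy hxz
  have hyz : Sim (idealGraph I) y z := by
    rw [idealGraph_eq_comap_zdGraph hI, sim_comap_iff hmk]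
    exact huc.2 _ _ _ hxy hxz
  rw [mul_mem_iff_idealGraph_adj hI hα hy, mul_mem_iff_idealGraph_adj hI hα hz,
    SimpleGraph.adj_comm, SimpleGraph.adj_comm _ α]
  exact hyz.2 α

theorem stmt7 {R : Type*} [CommRing R] [Nontrivial R] (I : Ideal R)
    (hrad : I.radical = I)
    (huc : UniquelyComplemented (zdGraph (R ⧸ I)) (zdVertexSet (R ⧸ I)))
    (x y z α : R)
    (hxy : Orth (idealGraph I) x y) (hxz : Orth (idealGraph I) x z)
    (hα : α ∉ I) :
    α * y ∈ I ↔ α * z ∈ I :=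
  stmt7_general I hrad huc x y z α hxy hxz hα
end

section
/- Let R be a commutative ring with nonzero identity and I a radical ideal of R such that Γ(R/I) is uniquely complemented. If x ⊥ y in Γ_I(R), then the annihilator of y + I in R/I equals the annihilator of z + I in R/I for any z with x ⊥ z in Γ_I(R). -/
open Ideal Polynomial

/- Since I is radical, R ⧸ I is reduced, so no nonzero element of R ⧸ I squares
to zero. Hence x ↦ x + I preserves and reflects adjacency from Γ_I(R) to
Γ(R ⧸ I), and being onto, it carries x ⊥ y and x ⊥ z to x + I ⊥ y + I and x + I ⊥ z + I. Unique
complementation gives y + I ~ z + I, i.e. equal neighbourhoods, and in a reduced ring the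
neighbourhood of a vertex is its annihilator with 0 removed. -/

section Orth

variable {V W : Type*} {G : SimpleGraph V} {H : SimpleGraph W}

theorem Orth.map_of_surjective {f : V → W} (hf : Function.Surjective f)
    (hadj : ∀ a b, G.Adj a b ↔ H.Adj (f a) (f b)) {a b : V} (h : Orth G a b) :
    Orth H (f a) (f b) := by
  refine ⟨(hadj a b).mp h.1, fun c hc => ?_⟩
  obtain ⟨c, rfl⟩ := hf c
  exact h.2 c ⟨(hadj a c).mpr hc.1, (hadj b c).mpr hc.2⟩

end Orth

section Reduced

variable {S : Type*} [CommRing S] [IsReduced S]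

theorem zdGraph_adj_iff_of_isReduced {a b : S} :
    (zdGraph S).Adj a b ↔ a ≠ 0 ∧ b ≠ 0 ∧ a * b = 0 := by
  refine ⟨fun h => h.2, fun ⟨ha, hb, hab⟩ => ⟨?_, ha, hb, hab⟩⟩
  rintro rfl
  exact ha (sq_eq_zero_iff.mp (by rwa [sq]))

theorem setOf_mul_eq_zero_eq_of_sim {a b : S} (ha : a ≠ 0) (hb : b ≠ 0)
    (h : Sim (zdGraph S) a b) : {s | s * a = 0} = {s | s * b = 0} := by
  ext s
  simp only [Set.mem_ofPred_eq]
  by_cases hs : s = 0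
  · simp [hs]
  have hnbr := h.2 s
  simp only [zdGraph_adj_iff_of_isReduced, mul_comm _ s] at hnbr
  tauto

end Reduced

section IdealGraph

variable {R : Type*} [CommRing R] (I : Ideal R) [IsReduced (R ⧸ I)]

theorem idealGraph_adj_iff_zdGraph_adj_mk (x y : R) :
    (idealGraph I).Adj x y ↔
      (zdGraph (R ⧸ I)).Adj (Ideal.Quotient.mk I x) (Ideal.Quotient.mk I y) := by
  constructor
  · rintro ⟨-, hx, hy, hxy⟩
    rw [zdGraph_adj_iff_of_isReduced, ← map_mul]
    simp only [ne_eq, Ideal.Quotient.eq_zero_iff_mem]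
    exact ⟨hx, hy, hxy⟩
  · rintro ⟨hne, hx, hy, hxy⟩
    rw [ne_eq, Ideal.Quotient.eq_zero_iff_mem] at hx hy
    rw [← map_mul, Ideal.Quotient.eq_zero_iff_mem] at hxy
    exact ⟨fun h => hne (congrArg _ h), hx, hy, hxy⟩

theorem Orth.mk_of_isReduced {x y : R} (h : Orth (idealGraph I) x y) :
    Orth (zdGraph (R ⧸ I)) (Ideal.Quotient.mk I x) (Ideal.Quotient.mk I y) :=
  h.map_of_surjective Ideal.Quotient.mk_surjective (idealGraph_adj_iff_zdGraph_adj_mk I)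

end IdealGraph

theorem stmt17_general {R : Type*} [CommRing R] (I : Ideal R)
    (hrad : I.radical = I)
    (huc : UniquelyComplemented (zdGraph (R ⧸ I)) (zdVertexSet (R ⧸ I)))
    (x y : R) (hxy : Orth (idealGraph I) x y) :
    ∀ z : R, Orth (idealGraph I) x z →
      {s : R ⧸ I | s * Ideal.Quotient.mk I y = 0} =
        {s : R ⧸ I | s * Ideal.Quotient.mk I z = 0} := by
  intro z hxz
  have : IsReduced (R ⧸ I) := (Ideal.isRadical_iff_quotient_reduced I).mp hrad.le
  have hy := hxy.mk_of_isReduced I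
  have hz := hxz.mk_of_isReduced I
  exact setOf_mul_eq_zero_eq_of_sim hy.1.2.2.1 hz.1.2.2.1 (huc.2 _ _ _ hy hz)

theorem stmt17 {R : Type*} [CommRing R] [Nontrivial R] (I : Ideal R)
    (hrad : I.radical = I)
    (huc : UniquelyComplemented (zdGraph (R ⧸ I)) (zdVertexSet (R ⧸ I)))
    (x y : R) (hxy : Orth (idealGraph I) x y) :
    ∀ z : R, Orth (idealGraph I) x z →
      {s : R ⧸ I | s * Ideal.Quotient.mk I y = 0} =
        {s : R ⧸ I | s * Ideal.Quotient.mk I z = 0} :=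
  stmt17_general I hrad huc x y hxy
end
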